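/- Assume the semigroup satisfies LSI(c): H(f) ≤ c·E(f,f) for all f > 0, and the weak regularity condition with constant β: β·E(I_{2,1}f, I_{2,1}f) ≤ E(log(ρ^{1/2} f ρ^{1/2}) − log ρ, f) for all f > 0, where I_{2,1}(f) = ρ^{−1/4}(ρ^{1/2} f ρ^{1/2})^{1/2} ρ^{−1/4}. Then the modified log-Sobolev inequality holds with constant β/(2c): (β/(2c))·E(f) ≤ E(log(ρ^{1/2} f ρ^{1/2}) − log ρ, f) for all f > 0. -/

import Mathlib

open MeasureTheory
open scoped ComplexOrder

noncomputable section

/-- `ρ^p` (real power) via functional calculus. -/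
def rpowM {n : ℕ} (ρ : Matrix (Fin n) (Fin n) ℂ) (p : ℝ) : Matrix (Fin n) (Fin n) ℂ :=
  cfc (fun x : ℝ => x ^ p) ρ

/-- Operator logarithm via functional calculus. -/
def logM {n : ℕ} (g : Matrix (Fin n) (Fin n) ℂ) : Matrix (Fin n) (Fin n) ℂ :=
  cfc Real.log g

/-- Operator-valued entropy
`T₂(f) = ρ^{−1/4}(ρ^{1/4} f ρ^{1/4}) log(ρ^{1/4} f ρ^{1/4}) ρ^{−1/4}
− (1/4)(f log ρ + (log ρ) f)`. -/
def T2 {n : ℕ} (ρ f : Matrix (Fin n) (Fin n) ℂ) : Matrix (Fin n) (Fin n) ℂ :=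
  rpowM ρ (-(1/4)) * ((rpowM ρ (1/4) * f * rpowM ρ (1/4)) *
      logM (rpowM ρ (1/4) * f * rpowM ρ (1/4))) * rpowM ρ (-(1/4)) -
    (1/4 : ℂ) • (f * logM ρ + logM ρ * f)

/-- Scalar product `⟨f,g⟩ = tr(ρ^{1/2} f* ρ^{1/2} g)`. -/
def inn {n : ℕ} (ρ f g : Matrix (Fin n) (Fin n) ℂ) : ℂ :=
  (rpowM ρ (1/2) * f.conjTranspose * rpowM ρ (1/2) * g).trace

/-- `‖f‖₂² = tr(|ρ^{1/4} f ρ^{1/4}|²)`. -/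
def norm2sq {n : ℕ} (ρ f : Matrix (Fin n) (Fin n) ℂ) : ℝ :=
  (((rpowM ρ (1/4) * f * rpowM ρ (1/4)).conjTranspose *
      (rpowM ρ (1/4) * f * rpowM ρ (1/4))).trace).re

/-- The log-Sobolev functional `H(f) = ⟨f, T₂(f)⟩ − ‖f‖₂² log ‖f‖₂`. -/
def Hfun {n : ℕ} (ρ f : Matrix (Fin n) (Fin n) ℂ) : ℝ :=
  (inn ρ f (T2 ρ f)).re - norm2sq ρ f * Real.log (Real.sqrt (norm2sq ρ f))

/-- Dirichlet form `E(f,g) = −tr(ρ^{1/2} f* ρ^{1/2} L g)`. -/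
def dirichletForm {n : ℕ} (ρ : Matrix (Fin n) (Fin n) ℂ)
    (L : Matrix (Fin n) (Fin n) ℂ →ₗ[ℂ] Matrix (Fin n) (Fin n) ℂ)
    (f g : Matrix (Fin n) (Fin n) ℂ) : ℂ :=
  -(rpowM ρ (1/2) * f.conjTranspose * rpowM ρ (1/2) * L g).trace


/-- Relative entropy `E(f) = tr(ρ^{1/2} f ρ^{1/2}(log(ρ^{1/2} f ρ^{1/2}) − log ρ))
− ‖f‖₁ log ‖f‖₁`, `‖f‖₁ = tr(ρ^{1/2} f ρ^{1/2})` for positive `f`. -/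
def relEntropy {n : ℕ} (ρ f : Matrix (Fin n) (Fin n) ℂ) : ℝ :=
  ((rpowM ρ (1/2) * f * rpowM ρ (1/2) *
      (logM (rpowM ρ (1/2) * f * rpowM ρ (1/2)) - logM ρ)).trace).re -
    ((rpowM ρ (1/2) * f * rpowM ρ (1/2)).trace).re *
      Real.log ((rpowM ρ (1/2) * f * rpowM ρ (1/2)).trace).re

/-- `I_{2,1}(f) = ρ^{−1/4}(ρ^{1/2} f ρ^{1/2})^{1/2} ρ^{−1/4}`. -/
def I21 {n : ℕ} (ρ f : Matrix (Fin n) (Fin n) ℂ) : Matrix (Fin n) (Fin n) ℂ :=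
  rpowM ρ (-(1/4)) * rpowM (rpowM ρ (1/2) * f * rpowM ρ (1/2)) (1/2) * rpowM ρ (-(1/4))


/-!
Put `A = ρ^{1/2} f ρ^{1/2}` and `S = A^{1/2}`, so that `I_{2,1}(f) = ρ^{-1/4} S ρ^{-1/4}`.
Conjugation by `ρ^{±1/4}` turns the `ρ`-weighted scalar product, the norm `‖·‖₂` and the operator
entropy `T₂` at `ρ^{-1/4} S ρ^{-1/4}` into plain traces of expressions in `S` and `log ρ`, because
`log ρ` commutes with every power of `ρ`. With `S² = A` and `log S = ½ log A` this gives the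
identity `E(f) = 2 H(I_{2,1}(f))`, and then LSI at `I_{2,1}(f)` followed by WRC gives
`(β/2c) E(f) = (β/c) H(I_{2,1}(f)) ≤ β E(I_{2,1}f, I_{2,1}f) ≤ E(log(ρ^{1/2} f ρ^{1/2}) − log ρ, f)`.
-/

open scoped Matrix MatrixOrder

lemma mul_conj_mul_eq_self {M : Type*} [Monoid M] {P Q : M} (hPQ : P * Q = 1) (hQP : Q * P = 1)
    (X : M) : P * (Q * X * Q) * P = X := by
  simp only [← mul_assoc, hPQ, one_mul]
  rw [mul_assoc, hQP, mul_one]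

lemma Matrix.trace_conj_mul_conj {m R : Type*} [Fintype m] [DecidableEq m] [CommSemiring R]
    {P Q : Matrix m m R} (hPQ : P * Q = 1) (hQP : Q * P = 1) (X Y : Matrix m m R) :
    (P * X * P * (Q * Y * Q)).trace = (X * Y).trace := by
  have hcancel : P * X * P * (Q * Y * Q) = P * (X * Y * Q) := by
    simp only [← Matrix.mul_assoc]
    rw [Matrix.mul_assoc (P * X) P Q, hPQ, Matrix.mul_one]
  rw [hcancel, Matrix.trace_mul_comm, Matrix.mul_assoc, hQP, Matrix.mul_one]

section MatrixFunctions

variable {n : ℕ}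

section FunctionalCalculus

lemma continuousOn_spectrum_real (f : ℝ → ℝ) (A : Matrix (Fin n) (Fin n) ℂ) :
    ContinuousOn f (spectrum ℝ A) :=
  Matrix.finite_real_spectrum.continuousOn f

lemma posDef_cfc (f : ℝ → ℝ) {A : Matrix (Fin n) (Fin n) ℂ} (hA : A.PosDef)
    (hf : ∀ x ∈ spectrum ℝ A, 0 < f x) : (cfc f A).PosDef :=
  Matrix.isStrictlyPositive_iff_posDef.mp
    ((cfc_isStrictlyPositive_iff f A (continuousOn_spectrum_real f A) hA.1).mpr hf)

lemma Matrix.PosDef.spectrum_pos {A : Matrix (Fin n) (Fin n) ℂ} (hA : A.PosDef) :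
    ∀ x ∈ spectrum ℝ A, 0 < x :=
  (StarOrderedRing.isStrictlyPositive_iff_spectrum_pos A hA.1).mp hA.isStrictlyPositive

lemma rpowM_conjTranspose (ρ : Matrix (Fin n) (Fin n) ℂ) (p : ℝ) : (rpowM ρ p)ᴴ = rpowM ρ p :=
  (cfc_predicate _ ρ : IsSelfAdjoint (rpowM ρ p)).star_eq

lemma rpowM_zero {ρ : Matrix (Fin n) (Fin n) ℂ} (hρ : ρ.IsHermitian) : rpowM ρ 0 = 1 := by
  simp only [rpowM, Real.rpow_zero]
  exact cfc_const_one ℝ ρ hρ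

lemma rpowM_one {ρ : Matrix (Fin n) (Fin n) ℂ} (hρ : ρ.IsHermitian) : rpowM ρ 1 = ρ := by
  simp only [rpowM, Real.rpow_one]
  exact cfc_id' ℝ ρ hρ

lemma rpowM_mul_rpowM {ρ : Matrix (Fin n) (Fin n) ℂ} (hρ : ρ.PosDef) (p q : ℝ) :
    rpowM ρ p * rpowM ρ q = rpowM ρ (p + q) := by
  rw [rpowM, rpowM, rpowM,
    ← cfc_mul _ _ ρ (continuousOn_spectrum_real _ _) (continuousOn_spectrum_real _ _)]
  exact cfc_congr fun x hx => (Real.rpow_add (hρ.spectrum_pos x hx) p q).symm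

lemma posDef_rpowM {ρ : Matrix (Fin n) (Fin n) ℂ} (hρ : ρ.PosDef) (p : ℝ) :
    (rpowM ρ p).PosDef :=
  posDef_cfc _ hρ fun x hx => Real.rpow_pos_of_pos (hρ.spectrum_pos x hx) p

lemma posDef_rpowM_mul_mul_rpowM {ρ f : Matrix (Fin n) (Fin n) ℂ} (hρ : ρ.PosDef)
    (hf : f.PosDef) (p : ℝ) : (rpowM ρ p * f * rpowM ρ p).PosDef := by
  have hconj := (Matrix.IsUnit.posDef_star_left_conjugate_iff (posDef_rpowM hρ p).isUnit).mpr hf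
  rwa [Matrix.star_eq_conjTranspose, rpowM_conjTranspose] at hconj

lemma logM_rpowM {A : Matrix (Fin n) (Fin n) ℂ} (hA : A.PosDef) (p : ℝ) :
    logM (rpowM A p) = p • logM A := by
  have hcomp := cfc_comp' Real.log (fun x : ℝ => x ^ p) A
    ((Matrix.finite_real_spectrum.image _).continuousOn _) (continuousOn_spectrum_real _ _) hA.1
  rw [logM, rpowM, ← hcomp, logM, ← cfc_smul p Real.log A (continuousOn_spectrum_real _ _)]
  exact cfc_congr fun x hx => Real.log_rpow (hA.spectrum_pos x hx) p

lemma logM_commute_rpowM (ρ : Matrix (Fin n) (Fin n) ℂ) (p : ℝ) :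
    Commute (logM ρ) (rpowM ρ p) :=
  cfc_commute_cfc _ _ ρ

end FunctionalCalculus

section Conjugation

variable {ρ : Matrix (Fin n) (Fin n) ℂ}

lemma rpowM_mul_rpowM_neg (hρ : ρ.PosDef) (p : ℝ) : rpowM ρ p * rpowM ρ (-p) = 1 := by
  rw [rpowM_mul_rpowM hρ, add_neg_cancel, rpowM_zero hρ.1]

lemma rpowM_neg_mul_rpowM (hρ : ρ.PosDef) (p : ℝ) : rpowM ρ (-p) * rpowM ρ p = 1 := by
  rw [rpowM_mul_rpowM hρ, neg_add_cancel, rpowM_zero hρ.1]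

lemma rpowM_quarter_conj_neg_quarter (hρ : ρ.PosDef) (X : Matrix (Fin n) (Fin n) ℂ) :
    rpowM ρ (1/4) * (rpowM ρ (-(1/4)) * X * rpowM ρ (-(1/4))) * rpowM ρ (1/4) = X :=
  mul_conj_mul_eq_self (rpowM_mul_rpowM_neg hρ _) (rpowM_neg_mul_rpowM hρ _) X

lemma inn_conj_neg_quarter (hρ : ρ.PosDef) (X Y : Matrix (Fin n) (Fin n) ℂ) :
    inn ρ (rpowM ρ (-(1/4)) * X * rpowM ρ (-(1/4))) (rpowM ρ (-(1/4)) * Y * rpowM ρ (-(1/4))) =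
      (Xᴴ * Y).trace := by
  set P := rpowM ρ (1/4)
  set Q := rpowM ρ (-(1/4))
  have hQ : Qᴴ = Q := rpowM_conjTranspose ρ _
  have hregroup : rpowM ρ (1/2) * (Q * X * Q)ᴴ * rpowM ρ (1/2) * (Q * Y * Q) =
      P * (P * (Q * Xᴴ * Q) * P) * P * (Q * Y * Q) := by
    have hhalf : rpowM ρ (1/2) = P * P := by
      rw [rpowM_mul_rpowM hρ]; norm_num
    simp only [hhalf, Matrix.conjTranspose_mul, hQ, Matrix.mul_assoc]
  rw [inn, hregroup, rpowM_quarter_conj_neg_quarter hρ,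
    Matrix.trace_conj_mul_conj (rpowM_mul_rpowM_neg hρ _) (rpowM_neg_mul_rpowM hρ _)]

lemma norm2sq_conj_neg_quarter (hρ : ρ.PosDef) (X : Matrix (Fin n) (Fin n) ℂ) :
    norm2sq ρ (rpowM ρ (-(1/4)) * X * rpowM ρ (-(1/4))) = (Xᴴ * X).trace.re := by
  rw [norm2sq, rpowM_quarter_conj_neg_quarter hρ]

lemma T2_conj_neg_quarter (hρ : ρ.PosDef) (S : Matrix (Fin n) (Fin n) ℂ) :
    T2 ρ (rpowM ρ (-(1/4)) * S * rpowM ρ (-(1/4))) =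
      rpowM ρ (-(1/4)) * (S * logM S - (1/4 : ℂ) • (S * logM ρ + logM ρ * S)) *
        rpowM ρ (-(1/4)) := by
  rw [T2, rpowM_quarter_conj_neg_quarter hρ]
  set Q := rpowM ρ (-(1/4))
  have hlogQ : logM ρ * Q = Q * logM ρ := (logM_commute_rpowM ρ _).eq
  have hright : Q * S * Q * logM ρ = Q * (S * logM ρ) * Q := by
    simp only [Matrix.mul_assoc, hlogQ]
  have hleft : logM ρ * (Q * S * Q) = Q * (logM ρ * S) * Q := by
    simp only [← Matrix.mul_assoc, hlogQ]
  rw [hright, hleft]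
  simp only [Matrix.mul_sub, Matrix.sub_mul, Matrix.mul_add, Matrix.add_mul, Matrix.mul_smul,
    Matrix.smul_mul]

end Conjugation

lemma two_mul_Hfun_conj_sqrt {ρ A : Matrix (Fin n) (Fin n) ℂ} (hρ : ρ.PosDef) (hA : A.PosDef) :
    2 * Hfun ρ (rpowM ρ (-(1/4)) * rpowM A (1/2) * rpowM ρ (-(1/4))) =
      (A * (logM A - logM ρ)).trace.re - A.trace.re * Real.log A.trace.re := by
  set S := rpowM A (1/2)
  have hSS : S * S = A := by
    rw [rpowM_mul_rpowM hA]; norm_num [rpowM_one hA.1]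
  have hSH : Sᴴ = S := rpowM_conjTranspose A _
  have hlogS : logM S = (1/2 : ℝ) • logM A := logM_rpowM hA _
  have hcycle : (S * logM ρ * S).trace = (A * logM ρ).trace := by
    rw [Matrix.trace_mul_cycle, hSS]
  have htrace_nonneg : 0 ≤ A.trace.re := (Complex.nonneg_iff.mp hA.posSemidef.trace_nonneg).1
  rw [Hfun, T2_conj_neg_quarter hρ, inn_conj_neg_quarter hρ, norm2sq_conj_neg_quarter hρ, hSH, hSS,
    Real.log_sqrt htrace_nonneg, hlogS]
  simp only [Matrix.mul_sub, Matrix.mul_add, Matrix.mul_smul, ← Matrix.mul_assoc, hSS,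
    Matrix.trace_sub, Matrix.trace_add, Matrix.trace_smul, hcycle]
  norm_num
  ring

lemma posDef_I21 {ρ f : Matrix (Fin n) (Fin n) ℂ} (hρ : ρ.PosDef) (hf : f.PosDef) :
    (I21 ρ f).PosDef :=
  posDef_rpowM_mul_mul_rpowM hρ (posDef_rpowM (posDef_rpowM_mul_mul_rpowM hρ hf _) _) _

theorem relEntropy_eq_two_mul_Hfun_I21 {ρ f : Matrix (Fin n) (Fin n) ℂ} (hρ : ρ.PosDef)
    (hf : f.PosDef) : relEntropy ρ f = 2 * Hfun ρ (I21 ρ f) :=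
  (two_mul_Hfun_conj_sqrt hρ (posDef_rpowM_mul_mul_rpowM hρ hf _)).symm

end MatrixFunctions

theorem LSI_and_WRC_implies_MLSI_general (n : ℕ)
    (L : Matrix (Fin n) (Fin n) ℂ →ₗ[ℂ] Matrix (Fin n) (Fin n) ℂ)
    (ρ : Matrix (Fin n) (Fin n) ℂ) (hρ : ρ.PosDef)
    (c β : ℝ) (hc : 0 < c) (hβ : 0 < β)
    (hLSI : ∀ f : Matrix (Fin n) (Fin n) ℂ, f.PosDef →
      Hfun ρ f ≤ c * (dirichletForm ρ L f f).re)
    (hWRC : ∀ f : Matrix (Fin n) (Fin n) ℂ, f.PosDef →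
      β * (dirichletForm ρ L (I21 ρ f) (I21 ρ f)).re ≤
        (dirichletForm ρ L (logM (rpowM ρ (1/2) * f * rpowM ρ (1/2)) - logM ρ) f).re) :
    ∀ f : Matrix (Fin n) (Fin n) ℂ, f.PosDef →
      β / (2 * c) * relEntropy ρ f ≤
        (dirichletForm ρ L (logM (rpowM ρ (1/2) * f * rpowM ρ (1/2)) - logM ρ) f).re := by
  intro f hf
  calc β / (2 * c) * relEntropy ρ f = β / c * Hfun ρ (I21 ρ f) := by
        rw [relEntropy_eq_two_mul_Hfun_I21 hρ hf]; field_simp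
    _ ≤ β / c * (c * (dirichletForm ρ L (I21 ρ f) (I21 ρ f)).re) := by
        gcongr; exact hLSI _ (posDef_I21 hρ hf)
    _ = β * (dirichletForm ρ L (I21 ρ f) (I21 ρ f)).re := by field_simp
    _ ≤ _ := hWRC f hf

/-- Proposition 13: LSI(c) together with the weak regularity condition with constant
`β` implies the modified log-Sobolev inequality MLSI(β/(2c)). -/
theorem LSI_and_WRC_implies_MLSI (n : ℕ)
    (L : Matrix (Fin n) (Fin n) ℂ →ₗ[ℂ] Matrix (Fin n) (Fin n) ℂ)
    (ρ : Matrix (Fin n) (Fin n) ℂ) (hρ : ρ.PosDef) (hρtr : ρ.trace = 1)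
    (c β : ℝ) (hc : 0 < c) (hβ : 0 < β)
    (hLSI : ∀ f : Matrix (Fin n) (Fin n) ℂ, f.PosDef →
      Hfun ρ f ≤ c * (dirichletForm ρ L f f).re)
    (hWRC : ∀ f : Matrix (Fin n) (Fin n) ℂ, f.PosDef →
      β * (dirichletForm ρ L (I21 ρ f) (I21 ρ f)).re ≤
        (dirichletForm ρ L (logM (rpowM ρ (1/2) * f * rpowM ρ (1/2)) - logM ρ) f).re) :
    ∀ f : Matrix (Fin n) (Fin n) ℂ, f.PosDef →
      β / (2 * c) * relEntropy ρ f ≤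
        (dirichletForm ρ L (logM (rpowM ρ (1/2) * f * rpowM ρ (1/2)) - logM ρ) f).re :=
  LSI_and_WRC_implies_MLSI_general n L ρ hρ c β hc hβ hLSI hWRC

end
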